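/- arXiv:1202.2680 — 2 statements merged into one kernel-verified Lean document; each statement's English description precedes it below -/
import Mathlib

section
/- (Countability of uncovered times) Fix constants b > 0 and Λ > 0, and for (t₀, x₀) ∈ ℝ⁺ × ℝ let T(t₀, x₀) := {(t,x) : |x − x₀| < b − Λ(t − t₀), 0 < t − t₀ < b/Λ} be the open forward triangle with vertex base at (t₀, x₀). Let C' ⊆ ℝ⁺ × ℝ be a set such that for every (t',x') ∈ C' the triangle T(t',x') is disjoint from C'. Then for every compact K ⊂ ℝ⁺ × ℝ the set {τ ∈ ℝ⁺ : ({τ} × ℝ) ∩ C' ∩ K ≠ ∅} is finite; consequently {τ ∈ ℝ⁺ : ({τ} × ℝ) ∩ C' ≠ ∅} is at most countable. -/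
open Set Metric
open scoped NNReal

/-!
Two points of `C'` at different times are at distance more than `δ = b / (2 (1 + Λ))`: if the
later one were that close to the earlier one, it would lie in the forward triangle of the earlier
one. Choosing one point of `C' ∩ K` per time therefore gives a `δ`-separated subset of the
compact set `K`, which is finite. Exhausting the plane by countably many compact sets gives
countability.
-/

theorem Metric.IsSeparated.finite_of_isCompact {X : Type*} [PseudoEMetricSpace X] {ε : ℝ≥0}
    {K C : Set X} (hε : ε ≠ 0) (hK : IsCompact K) (hCK : C ⊆ K) (hC : IsSeparated ε C) :
    C.Finite := by
  obtain ⟨N, -, hN, hcover⟩ :=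
    exists_finite_isCover_of_isCompact (ε := ε / 2) (by simpa using hε) hK
  rw [← encard_lt_top_iff]
  calc C.encard ≤ packingNumber ε K := hC.encard_le_packingNumber hCK
    _ = packingNumber (2 * (ε / 2)) K := by rw [mul_div_cancel₀ _ two_ne_zero]
    _ ≤ externalCoveringNumber (ε / 2) K := packingNumber_two_mul_le_externalCoveringNumber _ _
    _ ≤ N.encard := hcover.externalCoveringNumber_le_encard
    _ < ⊤ := hN.encard_lt_top

theorem countable_image_of_finite_image_inter_isCompact {X Y : Type*} [TopologicalSpace X]
    [SigmaCompactSpace X] {f : X → Y} {C : Set X}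
    (h : ∀ K, IsCompact K → (f '' (C ∩ K)).Finite) : (f '' C).Countable := by
  have hC : C = ⋃ n, C ∩ compactCovering X n := by
    rw [← inter_iUnion, iUnion_compactCovering, inter_univ]
  rw [hC, image_iUnion]
  exact countable_iUnion fun n ↦ (h _ (isCompact_compactCovering X n)).countable

theorem setOf_nonempty_singleton_prod_univ_inter {α β : Type*} (S : Set (α × β)) :
    {a : α | (({a} ×ˢ (univ : Set β)) ∩ S).Nonempty} = Prod.fst '' S := by
  ext a
  simp [Set.Nonempty, and_comm]

def forwardTriangle (b Λ : ℝ) (p : ℝ × ℝ) : Set (ℝ × ℝ) :=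
  {q | |q.2 - p.2| < b - Λ * (q.1 - p.1) ∧ 0 < q.1 - p.1 ∧ q.1 - p.1 < b / Λ}

section forwardTriangle

variable {b Λ : ℝ}

theorem mem_forwardTriangle_of_dist_le (hb : 0 < b) (hΛ : 0 < Λ) {p q : ℝ × ℝ}
    (hpq : p.1 < q.1) (hd : dist p q ≤ b / (2 * (1 + Λ))) : q ∈ forwardTriangle b Λ p := by
  have ht : q.1 - p.1 ≤ dist p q := by
    rw [Prod.dist_eq, Real.dist_eq p.1, abs_sub_comm]
    exact (le_abs_self _).trans (le_max_left _ _)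
  have hx : |q.2 - p.2| ≤ dist p q := by
    rw [Prod.dist_eq, Real.dist_eq p.2, abs_sub_comm p.2]
    exact le_max_right _ _
  have hδ : (1 + Λ) * (b / (2 * (1 + Λ))) = b / 2 := by field_simp
  have hΛt : Λ * (q.1 - p.1) ≤ Λ * dist p q := mul_le_mul_of_nonneg_left ht hΛ.le
  have hΛd : Λ * dist p q ≤ Λ * (b / (2 * (1 + Λ))) := mul_le_mul_of_nonneg_left hd hΛ.le
  refine ⟨by linarith, sub_pos.2 hpq, ?_⟩
  rw [lt_div_iff₀' hΛ]
  linarith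

variable {C : Set (ℝ × ℝ)}

theorem isSeparated_of_forwardTriangle_inter_eq_empty (hb : 0 < b) (hΛ : 0 < Λ)
    (hdisj : ∀ p ∈ C, forwardTriangle b Λ p ∩ C = ∅) {A : Set (ℝ × ℝ)} (hAC : A ⊆ C)
    (hA : InjOn Prod.fst A) : IsSeparated (b / (2 * (1 + Λ))).toNNReal A := by
  have hlater : ∀ p ∈ A, ∀ q ∈ A, p.1 < q.1 →
      ENNReal.ofReal (b / (2 * (1 + Λ))) < edist p q := by
    intro p hp q hq hpq
    rw [edist_dist, ENNReal.ofReal_lt_ofReal_iff_of_nonneg (by positivity)]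
    by_contra! hd
    have hq' : q ∈ forwardTriangle b Λ p ∩ C :=
      ⟨mem_forwardTriangle_of_dist_le hb hΛ hpq hd, hAC hq⟩
    rw [hdisj p (hAC hp)] at hq'
    exact hq'
  intro p hp q hq hne
  rcases lt_or_gt_of_ne (hA.ne hp hq hne) with h | h
  · exact hlater p hp q hq h
  · rw [edist_comm]; exact hlater q hq p hp h

theorem finite_image_fst_inter_of_forwardTriangle_inter_eq_empty (hb : 0 < b) (hΛ : 0 < Λ)
    (hdisj : ∀ p ∈ C, forwardTriangle b Λ p ∩ C = ∅) {K : Set (ℝ × ℝ)} (hK : IsCompact K) :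
    (Prod.fst '' (C ∩ K)).Finite := by
  obtain ⟨A, hA, hbij⟩ := exists_subset_bijOn (C ∩ K) Prod.fst
  have hsep := isSeparated_of_forwardTriangle_inter_eq_empty hb hΛ hdisj
    (hA.trans inter_subset_left) hbij.injOn
  rw [← hbij.image_eq]
  have hδ : (b / (2 * (1 + Λ))).toNNReal ≠ 0 := (Real.toNNReal_pos.2 (by positivity)).ne'
  exact (hsep.finite_of_isCompact hδ hK (hA.trans inter_subset_right)).image _

end forwardTriangle

theorem countability_of_uncovered_times_general
    (b Λ : ℝ) (hb : 0 < b) (hΛ : 0 < Λ)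
    (T : ℝ × ℝ → Set (ℝ × ℝ))
    (hT : ∀ p : ℝ × ℝ, T p =
      {q : ℝ × ℝ | |q.2 - p.2| < b - Λ * (q.1 - p.1) ∧ 0 < q.1 - p.1 ∧ q.1 - p.1 < b / Λ})
    (C' : Set (ℝ × ℝ))
    (hdisj : ∀ p ∈ C', T p ∩ C' = ∅) :
    (∀ K : Set (ℝ × ℝ), IsCompact K →
        {τ : ℝ | (({τ} ×ˢ (univ : Set ℝ)) ∩ C' ∩ K).Nonempty}.Finite) ∧
      {τ : ℝ | (({τ} ×ˢ (univ : Set ℝ)) ∩ C').Nonempty}.Countable := by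
  obtain rfl : T = forwardTriangle b Λ := funext hT
  have hfinite : ∀ K, IsCompact K → (Prod.fst '' (C' ∩ K)).Finite := fun _ hK ↦
    finite_image_fst_inter_of_forwardTriangle_inter_eq_empty hb hΛ hdisj hK
  simp only [inter_assoc, setOf_nonempty_singleton_prod_univ_inter]
  exact ⟨hfinite, countable_image_of_finite_image_inter_isCompact hfinite⟩

/-- **Countability of uncovered times** (covering lemma in the proof of Theorem 1.2):
fix `b > 0` and `Λ > 0` and let `T(t₀,x₀)` be the open forward triangle
`{(t,x) : |x-x₀| < b - Λ(t-t₀), 0 < t-t₀ < b/Λ}`. If `C' ⊆ ℝ⁺ × ℝ` is such that for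
every `(t',x') ∈ C'` the triangle `T(t',x')` is disjoint from `C'`, then for every
compact `K` the set of times `τ` at which `({τ} × ℝ) ∩ C' ∩ K` is nonempty is finite;
consequently the set of times carrying points of `C'` is at most countable. -/
theorem countability_of_uncovered_times
    (b Λ : ℝ) (hb : 0 < b) (hΛ : 0 < Λ)
    (T : ℝ × ℝ → Set (ℝ × ℝ))
    (hT : ∀ p : ℝ × ℝ, T p =
      {q : ℝ × ℝ | |q.2 - p.2| < b - Λ * (q.1 - p.1) ∧ 0 < q.1 - p.1 ∧ q.1 - p.1 < b / Λ})
    (C' : Set (ℝ × ℝ)) (hC' : C' ⊆ Ioi (0 : ℝ) ×ˢ (univ : Set ℝ))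
    (hdisj : ∀ p ∈ C', T p ∩ C' = ∅) :
    (∀ K : Set (ℝ × ℝ), IsCompact K →
        {τ : ℝ | (({τ} ×ˢ (univ : Set ℝ)) ∩ C' ∩ K).Nonempty}.Finite) ∧
      {τ : ℝ | (({τ} ×ˢ (univ : Set ℝ)) ∩ C').Nonempty}.Countable :=
  countability_of_uncovered_times_general b Λ hb hΛ T hT C' hdisj
end

section
/- For the 2×2 system u_t = 0, v_t + ((1 + v + u) v)_x = 0 (strictly hyperbolic for (u,v) near the origin), the second eigenvalue satisfies λ₂(u,v) = 1 + u + 2v, so D_x λ₂(u,v) = D_x u + 2 D_x v can have a nonzero Cantor part for a BV solution (take any nonconstant BV function u₀ with purely Cantor derivative and v ≡ 0, giving a stationary solution); nevertheless the second component (D_u λ₂ · r₂)(l₂ · (u,v)_x) = (2/(1 + u + 2v)) ( v D_x u + (1 + u + 2v) D_x v ) has no Cantor part outside a countable set of times, in accordance with the general theorem. In particular, for the stationary solution u(t,x) = u₀(x), v ≡ 0, the measure (D_u λ₂ · r₂)(l₂ · (u,v)_x) equals 2 D_x v = 0 and hence has no Cantor part, while D_x λ₂ = D_x u₀ is purely Cantor.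 -/
open MeasureTheory Set Filter Topology
open scoped ENNReal

noncomputable section

/-- A signed measure `μ` on `ℝ` has **no Cantor part** (w.r.t. `vol`): outside of a
countable set it vanishes on `vol`-negligible sets. -/
def NoCantorPart (vol : Measure ℝ) (μ : SignedMeasure ℝ) : Prop :=
  ∃ S : Set ℝ, S.Countable ∧
    ∀ A : Set ℝ, MeasurableSet A → A ∩ S = ∅ → vol A = 0 → μ A = 0

/-- A signed measure on `ℝ` is **purely Cantor**: nonzero, singular with respect to
Lebesgue measure, and without atoms (e.g. the derivative of the Cantor–Vitali
function). -/
def PurelyCantorMeasure (μ : SignedMeasure ℝ) : Prop :=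
  μ ≠ 0 ∧
  (∃ S : Set ℝ, MeasurableSet S ∧ volume S = 0 ∧
    ∀ A : Set ℝ, MeasurableSet A → A ∩ S = ∅ → μ A = 0) ∧
  ∀ x : ℝ, μ {x} = 0

/-- The flux of the 2×2 system `u_t = 0`, `v_t + ((1+u+v)v)_x = 0`. -/
def exFlux : ℝ × ℝ → ℝ × ℝ := fun p => (0, (1 + p.1 + p.2) * p.2)

/-! A signed measure on `ℝ` is determined by its values on the intervals `Ioc a b`: comparing
`s` and `t` amounts to comparing the finite measures `s⁺ + t⁻` and `t⁺ + s⁻`. Along the stationary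
solution `(u₀, 0)` this identifies `D_x λ₂` with `Du₀`, and the second wave component `2 D_x v`
with `0`. That `(u₀, 0)` solves the system weakly is Fubini together with `∫ ∂ₜφ(t, x) dt = 0` for
compactly supported `φ`. -/

theorem MeasureTheory.SignedMeasure.ext_of_Ioc {α : Type*} [TopologicalSpace α]
    {_m : MeasurableSpace α} [SecondCountableTopology α] [ConditionallyCompleteLinearOrder α]
    [OrderTopology α] [BorelSpace α] [NoMinOrder α] (s t : SignedMeasure α)
    (h : ∀ ⦃a b⦄, a < b → s (Ioc a b) = t (Ioc a b)) : s = t := by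
  have key : s.toJordanDecomposition.posPart + t.toJordanDecomposition.negPart =
      t.toJordanDecomposition.posPart + s.toJordanDecomposition.negPart := by
    refine Measure.ext_of_Ioc _ _ fun a b hab => ?_
    have hst := h hab
    rw [s.apply_eq_posPart_real_sub_negPart_real measurableSet_Ioc,
      t.apply_eq_posPart_real_sub_negPart_real measurableSet_Ioc] at hst
    rw [← measureReal_eq_measureReal_iff, measureReal_add_apply, measureReal_add_apply]
    linarith
  rw [← s.toSignedMeasure_toJordanDecomposition, ← t.toSignedMeasure_toJordanDecomposition,
    JordanDecomposition.toSignedMeasure, JordanDecomposition.toSignedMeasure,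
    sub_eq_sub_iff_add_eq_add, ← Measure.toSignedMeasure_add, ← Measure.toSignedMeasure_add]
  exact Measure.toSignedMeasure_congr key

theorem HasCompactSupport.comp_prodMk_left {X Y M : Type*} [TopologicalSpace X]
    [TopologicalSpace Y] [T2Space X] [T2Space Y] [Zero M] {f : X × Y → M}
    (hf : HasCompactSupport f) (y : Y) : HasCompactSupport fun x => f (x, y) :=
  hf.comp_isClosedEmbedding
    (Function.LeftInverse.isClosedEmbedding (f := Prod.fst) (g := fun x => (x, y)) (fun _ => rfl)
      continuous_fst (by fun_prop))

theorem integral_fderiv_apply_fst_eq_zero {E F : Type*} [NormedAddCommGroup E]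
    [NormedSpace ℝ E] [NormedAddCommGroup F] [NormedSpace ℝ F] {φ : ℝ × E → F}
    (hφ : ContDiff ℝ 1 φ) (hc : HasCompactSupport φ) (x : E) :
    ∫ t : ℝ, fderiv ℝ φ (t, x) (1, 0) = 0 := by
  refine integral_eq_zero_of_hasDerivAt_of_integrable (f := fun t => φ (t, x)) (fun t => ?_) ?_ ?_
  · exact (hφ.differentiable one_ne_zero (t, x)).hasFDerivAt.comp_hasDerivAt t
      ((hasDerivAt_id t).prodMk (hasDerivAt_const t x))
  · exact (((hφ.continuous_fderiv one_ne_zero).clm_apply continuous_const).comp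
      (by fun_prop)).integrable_of_hasCompactSupport
      ((hc.fderiv_apply ℝ (1, 0)).comp_prodMk_left x)
  · exact (hφ.continuous.comp (by fun_prop)).integrable_of_hasCompactSupport
      (hc.comp_prodMk_left x)

theorem integral_mul_fderiv_apply_fst_eq_zero (f : ℝ → ℝ) {φ : ℝ × ℝ → ℝ}
    (hφ : ContDiff ℝ 1 φ) (hc : HasCompactSupport φ) :
    ∫ p : ℝ × ℝ, f p.2 * fderiv ℝ φ p (1, 0) = 0 := by
  by_cases hint : Integrable fun p : ℝ × ℝ => f p.2 * fderiv ℝ φ p (1, 0)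
  · rw [Measure.volume_eq_prod] at hint ⊢
    simp_rw [integral_prod_symm _ hint, integral_const_mul, integral_fderiv_apply_fst_eq_zero hφ hc,
      mul_zero, integral_zero]
  · exact integral_undef hint

open ContinuousLinearMap in
theorem hasFDerivAt_exFlux (p : ℝ × ℝ) :
    HasFDerivAt exFlux ((0 : ℝ × ℝ →L[ℝ] ℝ).prod
      (p.2 • fst ℝ ℝ ℝ + (1 + p.1 + 2 * p.2) • snd ℝ ℝ ℝ)) p := by
  have hflux : HasFDerivAt (fun q : ℝ × ℝ => (1 + q.1 + q.2) * q.2)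
      ((1 + p.1 + p.2) • snd ℝ ℝ ℝ + p.2 • (fst ℝ ℝ ℝ + snd ℝ ℝ ℝ)) p :=
    ((hasFDerivAt_fst.const_add 1).add hasFDerivAt_snd).mul hasFDerivAt_snd
  refine (hasFDerivAt_const 0 p).prodMk (hflux.congr_fderiv ?_)
  ext <;> simp
  ring

theorem sharpness_example_general
    (u₀ : ℝ → ℝ)
    (hsmall : ∀ x, |u₀ x| < 1 / 4)
    (μ₀ : SignedMeasure ℝ)
    (hderiv : ∀ a b : ℝ, a ≤ b → μ₀ (Ioc a b) = u₀ b - u₀ a)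
    (hCantor : PurelyCantorMeasure μ₀) :
    -- λ₂(u,v) = 1 + u + 2v : the Jacobian of the flux has eigenvector (0,1) with
    -- eigenvalue 1 + u + 2v, and the system is strictly hyperbolic near v = 0:
    (∀ p : ℝ × ℝ, fderiv ℝ exFlux p (0, 1) = (1 + p.1 + 2 * p.2) • ((0 : ℝ), (1 : ℝ))) ∧
    (∀ x : ℝ, (0 : ℝ) < 1 + u₀ x + 2 * 0) ∧
    -- (u,v) = (u₀, 0) is a stationary distributional solution of the system:
    (∀ φ : ℝ × ℝ → ℝ, ContDiff ℝ 1 φ → HasCompactSupport φ →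
      ((∫ p : ℝ × ℝ, u₀ p.2 * fderiv ℝ φ p (1, 0)) = 0 ∧
       (∫ p : ℝ × ℝ, ((0 : ℝ) * fderiv ℝ φ p (1, 0)
          + (1 + u₀ p.2 + (0 : ℝ)) * (0 : ℝ) * fderiv ℝ φ p (0, 1))) = 0)) ∧
    -- D_x λ₂(u,v) = D_x u₀ + 2 D_x v = D_x u₀ is purely Cantor:
    (∀ μlam : SignedMeasure ℝ,
      (∀ a b : ℝ, a ≤ b →
        μlam (Ioc a b) = (1 + u₀ b + 2 * 0) - (1 + u₀ a + 2 * 0)) →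
      PurelyCantorMeasure μlam) ∧
    -- while the second component `(D_u λ₂ · r₂)(l₂ · (u,v)_x) = 2 D_x v` vanishes,
    -- hence has no Cantor part:
    (∀ ν : SignedMeasure ℝ,
      (∀ a b : ℝ, a ≤ b → ν (Ioc a b) = 2 * ((0 : ℝ) - (0 : ℝ))) →
      ν = 0 ∧ NoCantorPart volume ν) := by
  refine ⟨fun p => ?_, fun x => ?_,
    fun φ hφ hc => ⟨integral_mul_fderiv_apply_fst_eq_zero u₀ hφ hc, by simp⟩,
    fun μlam hμlam => ?_, fun ν hν => ?_⟩
  · simp [(hasFDerivAt_exFlux p).fderiv]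
  · linarith [(abs_lt.1 (hsmall x)).1]
  · have hμlam₀ : μlam = μ₀ := SignedMeasure.ext_of_Ioc _ _ fun a b hab => by
      rw [hμlam a b hab.le, hderiv a b hab.le]
      ring
    exact hμlam₀ ▸ hCantor
  · have hν₀ : ν = 0 := SignedMeasure.ext_of_Ioc _ _ fun a b hab => by simp [hν a b hab.le]
    exact ⟨hν₀, ∅, countable_empty, fun A _ _ _ => by simp [hν₀]⟩

/-- **Sharpness example** (Remark 6.2): for the strictly hyperbolic 2×2 system
`u_t = 0`, `v_t + ((1+u+v)v)_x = 0` the second characteristic speed is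
`λ₂(u,v) = 1 + u + 2v` (with right eigenvector `(0,1)`). For the stationary solution
`u(t,x) = u₀(x)`, `v ≡ 0` with `Du₀` purely Cantor, the measure
`D_x λ₂ = D_x u + 2 D_x v = D_x u₀` is purely Cantor, while the second wave component
`(D_u λ₂ · r₂)(l₂ · (u,v)_x) = (2/(1+u+2v)) (v D_x u + (1+u+2v) D_x v) = 2 D_x v = 0`
has no Cantor part, in accordance with the general theorem. -/
theorem sharpness_example
    (u₀ : ℝ → ℝ) (hBV : BoundedVariationOn u₀ univ)
    (hsmall : ∀ x, |u₀ x| < 1 / 4)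
    (μ₀ : SignedMeasure ℝ)
    (hderiv : ∀ a b : ℝ, a ≤ b → μ₀ (Ioc a b) = u₀ b - u₀ a)
    (hCantor : PurelyCantorMeasure μ₀) :
    -- λ₂(u,v) = 1 + u + 2v : the Jacobian of the flux has eigenvector (0,1) with
    -- eigenvalue 1 + u + 2v, and the system is strictly hyperbolic near v = 0:
    (∀ p : ℝ × ℝ, fderiv ℝ exFlux p (0, 1) = (1 + p.1 + 2 * p.2) • ((0 : ℝ), (1 : ℝ))) ∧
    (∀ x : ℝ, (0 : ℝ) < 1 + u₀ x + 2 * 0) ∧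
    -- (u,v) = (u₀, 0) is a stationary distributional solution of the system:
    (∀ φ : ℝ × ℝ → ℝ, ContDiff ℝ 1 φ → HasCompactSupport φ →
      ((∫ p : ℝ × ℝ, u₀ p.2 * fderiv ℝ φ p (1, 0)) = 0 ∧
       (∫ p : ℝ × ℝ, ((0 : ℝ) * fderiv ℝ φ p (1, 0)
          + (1 + u₀ p.2 + (0 : ℝ)) * (0 : ℝ) * fderiv ℝ φ p (0, 1))) = 0)) ∧
    -- D_x λ₂(u,v) = D_x u₀ + 2 D_x v = D_x u₀ is purely Cantor:
    (∀ μlam : SignedMeasure ℝ,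
      (∀ a b : ℝ, a ≤ b →
        μlam (Ioc a b) = (1 + u₀ b + 2 * 0) - (1 + u₀ a + 2 * 0)) →
      PurelyCantorMeasure μlam) ∧
    -- while the second component `(D_u λ₂ · r₂)(l₂ · (u,v)_x) = 2 D_x v` vanishes,
    -- hence has no Cantor part:
    (∀ ν : SignedMeasure ℝ,
      (∀ a b : ℝ, a ≤ b → ν (Ioc a b) = 2 * ((0 : ℝ) - (0 : ℝ))) →
      ν = 0 ∧ NoCantorPart volume ν) :=
  sharpness_example_general u₀ hsmall μ₀ hderiv hCantor

end
end
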